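/- arXiv:1507.06818 — 4 statements merged into one kernel-verified Lean document; each statement's English description precedes it below -/
import Mathlib

section
/- Let N be a natural number and p ∈ (0, 1/2). Then P(Bin(2N, p) ≥ N) ≥ P(Bin(2N+2, p) ≥ N+1), where Bin(n,p) denotes a binomial random variable with n trials and success probability p. -/
/-!
Adding two trials to `Bin(n, p)` gives, with `q = 1 - p` and `P(k) = P(Bin(n, p) = k)`,
`P(Bin(n+2, p) ≥ m+2) = P(Bin(n, p) ≥ m+1) - q² P(m+1) + p² P(m)`.
For `n = 2N` and `m = N - 1` (the case `N = 0` is immediate) the correction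
`p² P(N-1) - q² P(N)` is nonpositive, because `C(2N, N-1) ≤ C(2N, N)` and `p ≤ q`.
-/

/-- Tail probability of a binomial: P(Bin(n,p) ≥ m). -/
def binomTail (n m : ℕ) (p : ℝ) : ℝ :=
  ∑ k ∈ Finset.Icc m n, (n.choose k : ℝ) * p ^ k * (1 - p) ^ (n - k)

open Finset

/-- `P(Bin(n, p) = k)`; it is `0` for `k > n` through `n.choose k`, despite the truncated `n - k`. -/
def binomTerm (n k : ℕ) (p : ℝ) : ℝ :=
  (n.choose k : ℝ) * p ^ k * (1 - p) ^ (n - k)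

lemma binomTail_eq_sum_binomTerm (n m : ℕ) (p : ℝ) :
    binomTail n m p = ∑ k ∈ Icc m n, binomTerm n k p :=
  rfl

lemma binomTerm_of_lt {n k : ℕ} (h : n < k) (p : ℝ) : binomTerm n k p = 0 := by
  simp [binomTerm, Nat.choose_eq_zero_of_lt h]

lemma binomTerm_succ_succ (n k : ℕ) (p : ℝ) :
    binomTerm (n + 1) (k + 1) p = (1 - p) * binomTerm n (k + 1) p + p * binomTerm n k p := by
  rcases lt_or_ge n (k + 1) with h | h
  · rw [binomTerm_of_lt h]
    simp only [binomTerm, Nat.choose_succ_succ, Nat.choose_eq_zero_of_lt h]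
    rw [Nat.add_sub_add_right]
    push_cast
    ring
  · simp only [binomTerm, Nat.choose_succ_succ, Nat.add_sub_add_right]
    rw [show n - k = n - (k + 1) + 1 by omega]
    push_cast
    ring

lemma binomTail_eq_binomTerm_add (n m : ℕ) (p : ℝ) :
    binomTail n m p = binomTerm n m p + binomTail n (m + 1) p := by
  rcases lt_or_ge n m with h | h
  · simp [binomTail_eq_sum_binomTerm, binomTerm_of_lt h, Icc_eq_empty_of_lt h,
      Icc_eq_empty_of_lt (h.trans (Nat.lt_succ_self m))]
  · rw [binomTail_eq_sum_binomTerm, binomTail_eq_sum_binomTerm,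
      ← insert_Icc_add_one_left_eq_Icc h, sum_insert (by simp)]

/-- Pascal's rule for tails: condition on the outcome of the last trial. -/
lemma binomTail_succ_succ (n m : ℕ) (p : ℝ) :
    binomTail (n + 1) (m + 1) p = (1 - p) * binomTail n (m + 1) p + p * binomTail n m p := by
  have hshift : ∑ k ∈ Icc m n, binomTerm n (k + 1) p = binomTail n (m + 1) p := by
    have hsub : Icc (m + 1) n ⊆ Icc (m + 1) (n + 1) := Icc_subset_Icc_right n.le_succ
    rw [binomTail_eq_sum_binomTerm, sum_subset hsub fun k hk hkn =>
      binomTerm_of_lt (by simp only [mem_Icc] at hk hkn; omega) p, ← map_add_right_Icc, sum_map]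
    rfl
  rw [binomTail_eq_sum_binomTerm, ← map_add_right_Icc, sum_map]
  simp only [addRightEmbedding_apply, binomTerm_succ_succ, sum_add_distrib, ← mul_sum, hshift]
  rfl

lemma binomTail_add_two_add_two (n m : ℕ) (p : ℝ) :
    binomTail (n + 2) (m + 2) p
      = binomTail n (m + 1) p - (1 - p) ^ 2 * binomTerm n (m + 1) p
        + p ^ 2 * binomTerm n m p := by
  linear_combination binomTail_succ_succ (n + 1) (m + 1) p
    + (1 - p) * binomTail_succ_succ n (m + 1) p + p * binomTail_succ_succ n m p
    - (1 - p) ^ 2 * binomTail_eq_binomTerm_add n (m + 1) p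
    + p ^ 2 * binomTail_eq_binomTerm_add n m p

lemma sq_mul_binomTerm_le {n m : ℕ} {p : ℝ} (hp0 : 0 ≤ p) (hpq : p ≤ 1 - p) (hm : m < n / 2) :
    p ^ 2 * binomTerm n m p ≤ (1 - p) ^ 2 * binomTerm n (m + 1) p := by
  have hchoose : (n.choose m : ℝ) * p ≤ n.choose (m + 1) * (1 - p) :=
    mul_le_mul (mod_cast Nat.choose_le_succ_of_lt_half_left hm) hpq hp0 (Nat.cast_nonneg _)
  have hq : 0 ≤ 1 - p := hp0.trans hpq
  have hn : n - m = n - (m + 1) + 1 := by omega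
  calc p ^ 2 * binomTerm n m p
      = (n.choose m * p) * (p ^ (m + 1) * (1 - p) ^ (n - m)) := by
        rw [binomTerm]; ring
    _ ≤ (n.choose (m + 1) * (1 - p)) * (p ^ (m + 1) * (1 - p) ^ (n - m)) := by
        gcongr
    _ = (1 - p) ^ 2 * binomTerm n (m + 1) p := by
        rw [binomTerm, hn]; ring

theorem stmt0 (N : ℕ) (p : ℝ) (hp0 : 0 < p) (hp : p < 1 / 2) :
    binomTail (2 * N) N p ≥ binomTail (2 * N + 2) (N + 1) p := by
  rcases N with _ | M
  · norm_num [binomTail, sum_Icc_succ_top]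
    nlinarith
  · have hcorr := sq_mul_binomTerm_le (n := 2 * M + 2) (m := M) hp0.le (by linarith) (by omega)
    have hstep := binomTail_add_two_add_two (2 * M + 2) M p
    rw [show 2 * (M + 1) = 2 * M + 2 by ring]
    linarith
end

section
/- Let N ≥ 1 be a natural number and p ∈ (0, 1/2). Let X and Y be independent with X ~ Bin(2N, p) and Y ~ Bin(2, p), and let Z = X + Y. Then the events {X ≥ N} and {Z ≥ N+1} differ exactly on the union of the disjoint events {X = N, Y = 0} and {X = N-1, Y = 2}, and P(X = N, Y = 0) ≥ P(X = N-1, Y = 2). -/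
theorem stmt1 (N : ℕ) (hN : 1 ≤ N) (p : ℝ) (hp0 : 0 < p) (hp : p < 1 / 2) :
    (∀ x y : ℕ, y ≤ 2 →
      (¬ ((N ≤ x) ↔ (N + 1 ≤ x + y)) ↔ ((x = N ∧ y = 0) ∨ (x = N - 1 ∧ y = 2)))) ∧
    (∀ x y : ℕ, ¬ ((x = N ∧ y = 0) ∧ (x = N - 1 ∧ y = 2))) ∧
    ((2 * N).choose N : ℝ) * p ^ N * (1 - p) ^ N * (((2).choose 0 : ℝ) * p ^ 0 * (1 - p) ^ 2) ≥
      ((2 * N).choose (N - 1) : ℝ) * p ^ (N - 1) * (1 - p) ^ (N + 1) *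
        (((2).choose 2 : ℝ) * p ^ 2 * (1 - p) ^ 0) := by
  refine ⟨fun x y hy => by omega, fun x y => by omega, ?_⟩
  obtain ⟨M, rfl⟩ : ∃ M, N = M + 1 := ⟨N - 1, (Nat.succ_pred_eq_of_pos hN).symm⟩
  have hq1 : (0:ℝ) < 1 - p := by linarith
  have hch : ((2 * (M + 1)).choose M : ℝ) ≤ ((2 * (M + 1)).choose (M + 1) : ℝ) := by
    have := Nat.choose_le_middle M (2 * (M + 1))
    rw [Nat.mul_div_cancel_left _ (by norm_num)] at this
    exact_mod_cast this
  have hcpos : (0:ℝ) ≤ ((2 * (M + 1)).choose (M + 1) : ℝ) := by positivity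
  have key : ((2 * (M + 1)).choose M : ℝ) * p ≤
      ((2 * (M + 1)).choose (M + 1) : ℝ) * (1 - p) :=
    mul_le_mul hch (by linarith) hp0.le hcpos
  have hF : (0:ℝ) < p ^ M * p * ((1 - p) ^ M * (1 - p) ^ 2) :=
    mul_pos (mul_pos (pow_pos hp0 M) hp0) (mul_pos (pow_pos hq1 M) (pow_pos hq1 2))
  have h2 := mul_le_mul_of_nonneg_right key hF.le
  simp only [Nat.add_sub_cancel, Nat.choose_self, Nat.choose_zero_right, Nat.cast_one,
    pow_zero, pow_succ]
  nlinarith [h2]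
end

section
/- Let d ≥ 5 be odd and p ∈ (0, 1/2). Then P(Bin(d-1, p) ≥ (d-1)/2) ≤ (1/2)·(1 + 1/√(d-1))·(4p(1-p))^((d-1)/2). -/
open Finset

namespace Nat

theorem two_mul_add_one_mul_centralBinom_sq_le (m : ℕ) :
    (2 * m + 1) * centralBinom m ^ 2 ≤ 16 ^ m := by
  induction m with
  | zero => simp
  | succ n ih =>
    have key : (n + 1) ^ 2 * ((2 * (n + 1) + 1) * centralBinom (n + 1) ^ 2)
        = 4 * (2 * n + 1) * (2 * n + 3) * ((2 * n + 1) * centralBinom n ^ 2) := by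
      calc _ = (2 * n + 3) * ((n + 1) * centralBinom (n + 1)) ^ 2 := by ring
        _ = _ := by rw [succ_mul_centralBinom_succ]; ring
    refine Nat.le_of_mul_le_mul_left ?_ (by positivity : 0 < (n + 1) ^ 2)
    calc _ = _ := key
      _ ≤ 4 * (2 * n + 1) * (2 * n + 3) * 16 ^ n := by gcongr
      _ ≤ (n + 1) ^ 2 * 16 * 16 ^ n := Nat.mul_le_mul_right _ (by nlinarith)
      _ = (n + 1) ^ 2 * 16 ^ (n + 1) := by ring

theorem centralBinom_mul_sqrt_le (m : ℕ) : (centralBinom m : ℝ) * √(2 * m) ≤ 4 ^ m := by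
  have h : ((2 * m + 1) * centralBinom m ^ 2 : ℝ) ≤ 16 ^ m := by
    exact_mod_cast two_mul_add_one_mul_centralBinom_sq_le m
  refine (pow_le_pow_iff_left₀ (by positivity) (by positivity) two_ne_zero).mp ?_
  rw [mul_pow, Real.sq_sqrt (by positivity), ← pow_mul, mul_comm m, pow_mul]
  norm_num
  linarith [sq_nonneg (centralBinom m : ℝ)]

theorem two_mul_sum_Icc_choose (m : ℕ) :
    2 * ∑ k ∈ Icc m (2 * m), (2 * m).choose k = 4 ^ m + centralBinom m := by
  have upper : ∑ k ∈ Icc m (2 * m), (2 * m).choose k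
      = ∑ k ∈ range (m + 1), (2 * m).choose k := by
    have h := sum_Ico_reflect ((2 * m).choose) 0 (by omega : m + 1 ≤ 2 * m + 1)
    rw [show 2 * m + 1 - (m + 1) = m by omega, Nat.sub_zero, ← range_eq_Ico] at h
    rw [← Ico_add_one_right_eq_Icc, ← h]
    exact sum_congr rfl fun k hk => choose_symm (by simp at hk; omega)
  have whole : ∑ k ∈ range m, (2 * m).choose k + ∑ k ∈ Icc m (2 * m), (2 * m).choose k
      = 4 ^ m := by
    rw [← Ico_add_one_right_eq_Icc, sum_range_add_sum_Ico _ (by omega), sum_range_choose,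
      pow_mul]
    norm_num
  rw [sum_range_succ] at upper
  rw [centralBinom_eq_two_mul_choose]
  omega

end Nat

theorem pow_mul_pow_sub_le_pow_mul_pow_sub {a b : ℝ} (ha : 0 ≤ a) (hab : a ≤ b) {j k n : ℕ}
    (hjk : j ≤ k) (hkn : k ≤ n) : a ^ k * b ^ (n - k) ≤ a ^ j * b ^ (n - j) := by
  have hb : 0 ≤ b := ha.trans hab
  calc a ^ k * b ^ (n - k) = a ^ j * b ^ (n - k) * a ^ (k - j) := by
        rw [mul_right_comm, ← pow_add, Nat.add_sub_of_le hjk]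
    _ ≤ a ^ j * b ^ (n - k) * b ^ (k - j) := by gcongr
    _ = a ^ j * b ^ (n - j) := by
        rw [mul_assoc, ← pow_add]
        congr 2
        omega

theorem binomTail_two_mul_le {m : ℕ} (hm : m ≠ 0) {p : ℝ} (hp0 : 0 ≤ p) (hp : p ≤ 1 / 2) :
    binomTail (2 * m) m p ≤ 1 / 2 * (1 + 1 / √(2 * m)) * (4 * p * (1 - p)) ^ m := by
  have hs : 0 < √(2 * m : ℝ) := Real.sqrt_pos.mpr (by positivity)
  have hq : 0 ≤ 1 - p := by linarith
  have hsum : (∑ k ∈ Icc m (2 * m), ((2 * m).choose k : ℝ)) = (4 ^ m + m.centralBinom) / 2 := by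
    rw [eq_div_iff two_ne_zero, mul_comm]
    exact_mod_cast Nat.two_mul_sum_Icc_choose m
  have hcentral : (m.centralBinom : ℝ) ≤ 4 ^ m / √(2 * m) :=
    (le_div_iff₀ hs).mpr (Nat.centralBinom_mul_sqrt_le m)
  calc binomTail (2 * m) m p
      ≤ ∑ k ∈ Icc m (2 * m), ((2 * m).choose k : ℝ) * (p ^ m * (1 - p) ^ (2 * m - m)) := by
        refine sum_le_sum fun k hk => ?_
        rw [mem_Icc] at hk
        rw [mul_assoc]
        exact mul_le_mul_of_nonneg_left
          (pow_mul_pow_sub_le_pow_mul_pow_sub hp0 (by linarith) hk.1 hk.2) (by positivity)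
    _ = (4 ^ m + m.centralBinom) / 2 * (p * (1 - p)) ^ m := by
        rw [← sum_mul, hsum, show 2 * m - m = m by omega, mul_pow]
    _ ≤ (4 ^ m + 4 ^ m / √(2 * m)) / 2 * (p * (1 - p)) ^ m := by gcongr
    _ = 1 / 2 * (1 + 1 / √(2 * m)) * (4 * p * (1 - p)) ^ m := by
        rw [mul_assoc 4 p, mul_pow 4]
        ring

theorem stmt4 (d : ℕ) (hd : 5 ≤ d) (hodd : Odd d) (p : ℝ) (hp0 : 0 < p) (hp : p < 1 / 2) :
    binomTail (d - 1) ((d - 1) / 2) p ≤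
      (1 / 2) * (1 + 1 / Real.sqrt (d - 1)) * (4 * p * (1 - p)) ^ ((d - 1) / 2) := by
  obtain ⟨m, rfl⟩ := hodd
  have hcast : ((2 * m + 1 : ℕ) : ℝ) - 1 = 2 * m := by push_cast; ring
  rw [hcast, Nat.add_sub_cancel, Nat.mul_div_cancel_left m two_pos]
  exact binomTail_two_mul_le (by omega) hp0.le hp.le
end

section
/- Let n ≥ 2 be an integer and g(x) = P(Bin(2n,x) ≥ n) − x. Then g has a unique root x* in the open interval (0, 1/2), and g(x) < 0 for all x ∈ (0, x*). -/
/-!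
The upper tails of the Bernstein basis telescope under differentiation, so
`g' x = 2n·C(2n-1, n-1)·x^(n-1)·(1-x)^n - 1`. The factor `x^(n-1)·(1-x)^n` increases up to its mode
`(n-1)/(2n-1)` and decreases afterwards, hence `g` is strictly convex and then strictly concave on
`[0, 1]`, with `g 0 = g 1 = 0`. For such a function, `g y ≤ 0` forces `g < 0` on `(0, y)`: left of
the inflection point by convexity from `g 0 = 0`, right of it by concavity towards `g 1 = 0`. This
gives uniqueness of the zero and the sign to its left; existence follows from the intermediate
value theorem, as `g'(0) = -1` and `g(1/2) > 0` by the symmetry of `Bin(2n, 1/2)` about `n`.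
-/

open Polynomial

section Bernstein

open Finset

variable {R : Type*} [CommRing R]

theorem sum_range_add_sum_Icc_bernsteinPolynomial {N k : ℕ} (hk : k ≤ N + 1) :
    ∑ i ∈ range k, bernsteinPolynomial R N i + ∑ i ∈ Icc k N, bernsteinPolynomial R N i = 1 := by
  rw [← bernsteinPolynomial.sum R N, range_eq_Ico, range_eq_Ico, ← Ico_add_one_right_eq_Icc,
    sum_Ico_consecutive _ k.zero_le hk]

theorem derivative_sum_range_bernsteinPolynomial (N j : ℕ) :
    derivative (∑ i ∈ range (j + 1), bernsteinPolynomial R N i) =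
      -(N * bernsteinPolynomial R (N - 1) j) := by
  induction j with
  | zero => simp [bernsteinPolynomial.derivative_zero]
  | succ j ih =>
    rw [sum_range_succ, derivative_add, ih, bernsteinPolynomial.derivative_succ]
    ring

theorem derivative_sum_Icc_bernsteinPolynomial {N j : ℕ} (hj : j ≤ N) :
    derivative (∑ i ∈ Icc (j + 1) N, bernsteinPolynomial R N i) =
      N * bernsteinPolynomial R (N - 1) j := by
  rw [eq_sub_of_add_eq' (sum_range_add_sum_Icc_bernsteinPolynomial (by omega)), derivative_sub,
    derivative_one, derivative_sum_range_bernsteinPolynomial, zero_sub, neg_neg]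

theorem two_mul_eval_half_sum_Icc_bernsteinPolynomial (n : ℕ) :
    2 * (∑ i ∈ Icc n (2 * n), bernsteinPolynomial ℝ (2 * n) i).eval (1 / 2) =
      1 + (bernsteinPolynomial ℝ (2 * n) n).eval (1 / 2) := by
  have hsymm : ∀ i ∈ Ico n (2 * n + 1), (bernsteinPolynomial ℝ (2 * n) i).eval (1 / 2) =
      (bernsteinPolynomial ℝ (2 * n) (2 * n - i)).eval (1 / 2) := fun i hi => by
    rw [bernsteinPolynomial.flip' _ _ _ (by simp at hi; omega), eval_comp]
    norm_num
  have hreflect : ∑ i ∈ Icc n (2 * n), (bernsteinPolynomial ℝ (2 * n) i).eval (1 / 2) =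
      ∑ i ∈ range n, (bernsteinPolynomial ℝ (2 * n) i).eval (1 / 2) +
        (bernsteinPolynomial ℝ (2 * n) n).eval (1 / 2) := by
    rw [← Ico_add_one_right_eq_Icc, sum_congr rfl hsymm,
      sum_Ico_reflect (fun i => (bernsteinPolynomial ℝ (2 * n) i).eval (1 / 2)) n (n := 2 * n)
        le_rfl,
      Nat.sub_self, show 2 * n + 1 - n = n + 1 by omega, ← range_eq_Ico, sum_range_succ]
  have htotal := congrArg (eval (1 / 2 : ℝ))
    (sum_range_add_sum_Icc_bernsteinPolynomial (R := ℝ) (N := 2 * n) (k := n) (by omega))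
  rw [eval_add, eval_finsetSum, eval_finsetSum, eval_one] at htotal
  rw [eval_finsetSum]
  linarith

end Bernstein

open Set

theorem hasDerivAt_pow_mul_one_sub_pow (a b : ℕ) (x : ℝ) :
    HasDerivAt (fun x : ℝ => x ^ (a + 1) * (1 - x) ^ (b + 1))
      (x ^ a * (1 - x) ^ b * ((a + 1) - (a + b + 2) * x)) x := by
  refine ((hasDerivAt_pow (a + 1) x).fun_mul
    (((hasDerivAt_id x).const_sub 1).fun_pow (b + 1))).congr_deriv ?_
  simp only [Nat.add_sub_cancel, Nat.cast_add, Nat.cast_one, id]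
  ring

theorem strictMonoOn_pow_mul_one_sub_pow (a b : ℕ) :
    StrictMonoOn (fun x : ℝ => x ^ (a + 1) * (1 - x) ^ (b + 1))
      (Icc 0 ((a + 1) / (a + b + 2))) := by
  refine strictMonoOn_of_deriv_pos (convex_Icc _ _) (by fun_prop) fun x hx => ?_
  rw [interior_Icc, mem_Ioo, lt_div_iff₀ (by positivity)] at hx
  rw [(hasDerivAt_pow_mul_one_sub_pow a b x).deriv]
  have h1x : 0 < 1 - x := by nlinarith
  have hx0 : 0 < x := hx.1
  have : (0 : ℝ) < a + 1 - (a + b + 2) * x := by linarith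
  positivity

theorem strictAntiOn_pow_mul_one_sub_pow (a b : ℕ) :
    StrictAntiOn (fun x : ℝ => x ^ (a + 1) * (1 - x) ^ (b + 1))
      (Icc ((a + 1) / (a + b + 2)) 1) := by
  refine strictAntiOn_of_deriv_neg (convex_Icc _ _) (by fun_prop) fun x hx => ?_
  rw [interior_Icc, mem_Ioo, div_lt_iff₀ (by positivity)] at hx
  rw [(hasDerivAt_pow_mul_one_sub_pow a b x).deriv]
  have hx0 : 0 < x := by nlinarith
  have h1x : 0 < 1 - x := by linarith
  have : a + 1 - (a + b + 2) * x < (0 : ℝ) := by linarith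
  exact mul_neg_of_pos_of_neg (by positivity) this

section ConvexConcave

variable {f : ℝ → ℝ} {a m b : ℝ}

theorem neg_of_strictConvexOn_of_strictConcaveOn (hconv : StrictConvexOn ℝ (Icc a m) f)
    (hconc : StrictConcaveOn ℝ (Icc m b) f) (ha : f a ≤ 0) (hb : 0 ≤ f b) {y z : ℝ}
    (haz : a < z) (hzy : z < y) (hyb : y < b) (hy : f y ≤ 0) : f z < 0 := by
  have concave_side : ∀ w, m ≤ w → w < y → f w < 0 := fun w hmw hwy => by
    have := hconc.lt_on_openSegment ⟨hmw, by linarith⟩ ⟨by linarith, le_rfl⟩ (by linarith : w ≠ b)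
      (by rw [openSegment_eq_Ioo (by linarith)]; exact ⟨hwy, hyb⟩)
    rw [min_lt_iff] at this
    exact (this.resolve_right (by linarith)).trans_le hy
  have convex_side : ∀ c, c ≤ m → f c ≤ 0 → z < c → f z < 0 := fun c hcm hc hzc =>
    (hconv.lt_on_openSegment ⟨le_rfl, by linarith⟩ ⟨by linarith, hcm⟩ (by linarith : a ≠ c)
      (by rw [openSegment_eq_Ioo (by linarith)]; exact ⟨haz, hzc⟩)).trans_le (max_le ha hc)
  rcases le_or_gt y m with hym | hmy
  · exact convex_side y hym hy hzy
  rcases le_or_gt m z with hmz | hzm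
  · exact concave_side z hmz hzy
  · exact convex_side m le_rfl (concave_side m le_rfl hmy).le hzm

theorem exists_zero_of_strictConvexOn_of_strictConcaveOn (hconv : StrictConvexOn ℝ (Icc a m) f)
    (hconc : StrictConcaveOn ℝ (Icc m b) f) (ha : f a ≤ 0) (hb : 0 ≤ f b) {x₀ x₁ : ℝ}
    (hcont : ContinuousOn f (Icc x₀ x₁)) (hax₀ : a ≤ x₀) (hx₀x₁ : x₀ < x₁) (hx₁b : x₁ ≤ b)
    (h₀ : f x₀ < 0) (h₁ : 0 < f x₁) :
    ∃ r ∈ Ioo a x₁, f r = 0 ∧ (∀ y ∈ Ioo a b, f y = 0 → y = r) ∧ ∀ z ∈ Ioo a r, f z < 0 := by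
  obtain ⟨r, hr, hr0⟩ := intermediate_value_Ioo hx₀x₁.le hcont ⟨h₀, h₁⟩
  have har : a < r := hax₀.trans_lt hr.1
  have hrb : r < b := hr.2.trans_le hx₁b
  refine ⟨r, ⟨har, hr.2⟩, hr0, fun y hy hy0 => ?_, fun z hz =>
    neg_of_strictConvexOn_of_strictConcaveOn hconv hconc ha hb hz.1 hz.2 hrb hr0.le⟩
  by_contra hne
  rcases lt_or_gt_of_ne hne with hlt | hlt
  · exact (neg_of_strictConvexOn_of_strictConcaveOn hconv hconc ha hb hy.1 hlt hrb hr0.le).ne hy0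
  · exact (neg_of_strictConvexOn_of_strictConcaveOn hconv hconc ha hb har hlt hy.2 hy0.le).ne hr0

end ConvexConcave

theorem exists_lt_of_hasDerivAt_neg {f : ℝ → ℝ} {f' a b : ℝ} (hf : HasDerivAt f f' a)
    (hf' : f' < 0) (hab : a < b) : ∃ x ∈ Ioo a b, f x < f a := by
  have hslope : ∀ᶠ x in nhdsWithin a (Ioi a), slope f a x < 0 :=
    hf.hasDerivWithinAt.limsup_slope_le' (lt_irrefl a) hf'
  obtain ⟨x, hx, hxab⟩ := (hslope.and (Ioo_mem_nhdsGT hab)).exists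
  rw [slope_def_field, div_neg_iff] at hx
  refine ⟨x, hxab, ?_⟩
  rcases hx with ⟨_, h⟩ | ⟨h, _⟩
  · linarith [hxab.1]
  · linarith

/-- `(bernsteinPolynomial ℝ N k).eval x` is `P(Bin(N, x) = k)`. -/
noncomputable def tailGap (n : ℕ) (x : ℝ) : ℝ :=
  (∑ k ∈ Finset.Icc n (2 * n), bernsteinPolynomial ℝ (2 * n) k).eval x - x

theorem continuous_tailGap (n : ℕ) : Continuous (tailGap n) :=
  (Polynomial.continuous _).sub continuous_id

theorem tailGap_zero {n : ℕ} (hn : n ≠ 0) : tailGap n 0 = 0 := by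
  simp [tailGap, eval_finsetSum, bernsteinPolynomial.eval_at_0, hn]

theorem tailGap_one (n : ℕ) : tailGap n 1 = 0 := by
  simp [tailGap, eval_finsetSum, bernsteinPolynomial.eval_at_1, two_mul]

theorem tailGap_half_pos (n : ℕ) : 0 < tailGap n (1 / 2) := by
  have hcentral : 0 < (bernsteinPolynomial ℝ (2 * n) n).eval (1 / 2) := by
    simp only [bernsteinPolynomial, eval_mul, eval_natCast, eval_pow, eval_X, eval_sub, eval_one]
    have := Nat.choose_pos (by omega : n ≤ 2 * n)
    positivity
  have := two_mul_eval_half_sum_Icc_bernsteinPolynomial n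
  rw [tailGap]
  linarith

theorem hasDerivAt_tailGap {n : ℕ} (hn : n ≠ 0) (x : ℝ) :
    HasDerivAt (tailGap n) (2 * n * (bernsteinPolynomial ℝ (2 * n - 1) (n - 1)).eval x - 1) x := by
  obtain ⟨j, rfl⟩ := Nat.exists_eq_add_one_of_ne_zero hn
  have h := derivative_sum_Icc_bernsteinPolynomial (R := ℝ) (N := 2 * (j + 1)) (j := j) (by omega)
  refine ((Polynomial.hasDerivAt _ x).sub (hasDerivAt_id x)).congr_deriv ?_
  simp [h]

theorem tailGap_strictConvexOn_strictConcaveOn {n : ℕ} (hn : 2 ≤ n) :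
    ∃ m, StrictConvexOn ℝ (Icc 0 m) (tailGap n) ∧ StrictConcaveOn ℝ (Icc m 1) (tailGap n) := by
  obtain ⟨a, rfl⟩ : ∃ a, n = a + 2 := ⟨n - 2, by omega⟩
  set c : ℝ := 2 * (a + 2 : ℕ) * (2 * (a + 2) - 1).choose (a + 1)
  have hc : 0 < c := by
    have := Nat.choose_pos (by omega : a + 1 ≤ 2 * (a + 2) - 1)
    positivity
  have hderiv :
      deriv (tailGap (a + 2)) = fun x => c * (x ^ (a + 1) * (1 - x) ^ (a + 1 + 1)) - 1 := by
    funext x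
    rw [(hasDerivAt_tailGap (by omega) x).deriv]
    simp only [bernsteinPolynomial, eval_mul, eval_natCast, eval_pow, eval_X, eval_sub, eval_one, c]
    rw [show 2 * (a + 2) - 1 - (a + 2 - 1) = a + 1 + 1 by omega, show a + 2 - 1 = a + 1 by omega]
    ring
  refine ⟨(a + 1) / (a + (a + 1 : ℕ) + 2), StrictMonoOn.strictConvexOn_of_deriv (convex_Icc _ _)
    (continuous_tailGap _).continuousOn ?_, StrictAntiOn.strictConcaveOn_of_deriv (convex_Icc _ _)
    (continuous_tailGap _).continuousOn ?_⟩
  · intro x hx y hy hxy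
    rw [hderiv]
    have := strictMonoOn_pow_mul_one_sub_pow a (a + 1) (interior_subset hx) (interior_subset hy) hxy
    dsimp only
    gcongr
  · intro x hx y hy hxy
    rw [hderiv]
    have := strictAntiOn_pow_mul_one_sub_pow a (a + 1) (interior_subset hx) (interior_subset hy) hxy
    dsimp only
    gcongr

theorem stmt9 (n : ℕ) (hn : 2 ≤ n) :
    let g : ℝ → ℝ := fun x =>
      (∑ k ∈ Finset.Icc n (2 * n), ((2 * n).choose k : ℝ) * x ^ k * (1 - x) ^ (2 * n - k)) - x
    ∃ xs ∈ Set.Ioo (0 : ℝ) (1 / 2), g xs = 0 ∧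
      (∀ y ∈ Set.Ioo (0 : ℝ) (1 / 2), g y = 0 → y = xs) ∧
      (∀ x ∈ Set.Ioo (0 : ℝ) xs, g x < 0) := by
  intro g
  have hg : g = tailGap n := funext fun x => by
    simp [g, tailGap, bernsteinPolynomial, eval_finsetSum]
  rw [hg]
  have hn0 : n ≠ 0 := by omega
  obtain ⟨m, hconv, hconc⟩ := tailGap_strictConvexOn_strictConcaveOn hn
  have hslope : 2 * n * (bernsteinPolynomial ℝ (2 * n - 1) (n - 1)).eval 0 - 1 < (0 : ℝ) := by
    simp [bernsteinPolynomial.eval_at_0, show n - 1 ≠ 0 by omega]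
  obtain ⟨x₀, hx₀, hgx₀⟩ :=
    exists_lt_of_hasDerivAt_neg (hasDerivAt_tailGap hn0 0) hslope one_half_pos
  rw [tailGap_zero hn0] at hgx₀
  obtain ⟨r, hr, hr0, huniq, hneg⟩ := exists_zero_of_strictConvexOn_of_strictConcaveOn hconv hconc
    (tailGap_zero hn0).le (tailGap_one n).ge (continuous_tailGap n).continuousOn hx₀.1.le hx₀.2
    (by norm_num) hgx₀ (tailGap_half_pos n)
  exact ⟨r, hr, hr0, fun y hy => huniq y ⟨hy.1, hy.2.trans one_half_lt_one⟩, hneg⟩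
end
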